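/- Let T_n be the words of length n over {0,1,3} avoiding the pattern (0,3), and I_w = S_w([0,9/2]) where S_i(x) = x/3 + i. For every i ∈ T_n there is at most one j ∈ T_n with j ≠ i such that I_i ∩ I_j ≠ ∅. -/

import Mathlib

/-- The alphabet `A = {0, 1, 3}`. -/
def A : Set ℕ := {0, 1, 3}

/-- The composition `S_w = S_{w_1} ∘ ... ∘ S_{w_n}` where `S_i(x) = x/3 + i`. -/
noncomputable def Sw (w : List ℕ) (x : ℝ) : ℝ :=
  w.foldr (fun a y => y / 3 + (a : ℝ)) x

/-- `T_n`: words of length `n` over `A` containing no consecutive pair `(0,3)`. -/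
def Tset (n : ℕ) : Set (List ℕ) :=
  {l | l.length = n ∧ (∀ x ∈ l, x ∈ A) ∧ ¬ [0, 3] <:+: l}

def Nval : List ℕ → ℕ
  | [] => 0
  | a :: w => a * 3 ^ w.length + Nval w

lemma Sw_eq (w : List ℕ) (x : ℝ) :
    Sw w x = (x + 3 * Nval w) / 3 ^ w.length := by
  induction w with
  | nil => simp [Sw, Nval]
  | cons a w ih =>
    have h3 : (3:ℝ) ^ w.length ≠ 0 := by positivity
    show Sw w x / 3 + a = _
    rw [ih]
    push_cast [Nval, List.length_cons]
    field_simp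
    ring

lemma Nval_le (w : List ℕ) (hw : ∀ x ∈ w, x ∈ A) :
    2 * Nval w + 3 ≤ 3 ^ (w.length + 1) := by
  induction w with
  | nil => simp [Nval]
  | cons a w ih =>
    have ha : a = 0 ∨ a = 1 ∨ a = 3 := hw a (by simp)
    have ih' := ih (fun x hx => hw x (by simp [hx]))
    simp only [Nval, List.length_cons]
    have h1 : 3 ^ (w.length + 1 + 1) = 3 * 3 ^ (w.length + 1) := by ring
    have h2 : 3 ^ (w.length + 1) = 3 * 3 ^ w.length := by ring
    rcases ha with h | h | h <;> subst h <;> omega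

lemma Nval_lt (w : List ℕ) (hw : ∀ x ∈ w, x ∈ A) (hh : w.head? ≠ some 3) :
    Nval w < 3 ^ w.length := by
  cases w with
  | nil => simp [Nval]
  | cons a w =>
    have ha : a = 0 ∨ a = 1 ∨ a = 3 := hw a (by simp)
    have ha' : a ≠ 3 := by simpa using hh
    have hb := Nval_le w (fun x hx => hw x (by simp [hx]))
    simp only [Nval, List.length_cons]
    have h2 : 3 ^ (w.length + 1) = 3 * 3 ^ w.length := by ring
    rcases ha with h | h | h <;> subst h <;> omega

lemma Nval_mod (w : List ℕ) (hw : ∀ x ∈ w, x ∈ A) (hne : w ≠ []) :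
    Nval w % 3 = 0 ∨ Nval w % 3 = 1 := by
  induction w with
  | nil => simp at hne
  | cons a w ih =>
    cases w with
    | nil =>
      have ha : a = 0 ∨ a = 1 ∨ a = 3 := hw a (by simp)
      show (a * 3 ^ ([] : List ℕ).length + Nval []) % 3 = 0 ∨ _ % 3 = 1
      simp only [List.length_nil, pow_zero, Nval]
      omega
    | cons b u =>
      have ih' := ih (fun x hx => hw x (by simp [hx])) (by simp)
      show (a * 3 ^ (b :: u).length + Nval (b :: u)) % 3 = 0 ∨
        (a * 3 ^ (b :: u).length + Nval (b :: u)) % 3 = 1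
      have h2 : 3 ^ (b :: u).length = 3 * 3 ^ u.length := by
        simp [pow_succ]; ring
      rw [h2]
      have ha : a = 0 ∨ a = 1 ∨ a = 3 := hw a (by simp)
      rcases ha with h | h | h <;> subst h <;> omega

lemma Nval_inj (u : List ℕ) : ∀ v : List ℕ, (∀ x ∈ u, x ∈ A) → (∀ x ∈ v, x ∈ A) →
    ¬ [0, 3] <:+: u → ¬ [0, 3] <:+: v → u.length = v.length →
    Nval u = Nval v → u = v := by
  induction u with
  | nil =>
    intro v _ _ _ _ hlen _
    exact (List.eq_nil_of_length_eq_zero hlen.symm).symm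
  | cons a u ih =>
    intro v hu hv hiu hiv hlen hval
    cases v with
    | nil => simp at hlen
    | cons b w =>
      simp only [List.length_cons, Nat.succ_inj] at hlen
      have ha : a = 0 ∨ a = 1 ∨ a = 3 := hu a (by simp)
      have hb : b = 0 ∨ b = 1 ∨ b = 3 := hv b (by simp)
      -- bounds
      have hbu := Nval_le u (fun x hx => hu x (by simp [hx]))
      have hbw := Nval_le w (fun x hx => hv x (by simp [hx]))
      have hu0 : a = 0 → Nval u < 3 ^ u.length := by
        intro h0
        refine Nval_lt u (fun x hx => hu x (by simp [hx])) ?_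
        intro hhead
        apply hiu
        cases u with
        | nil => simp at hhead
        | cons c u' =>
          simp only [List.head?_cons, Option.some_inj] at hhead
          subst h0 hhead
          exact ⟨[], u', rfl⟩
      have hw0 : b = 0 → Nval w < 3 ^ w.length := by
        intro h0
        refine Nval_lt w (fun x hx => hv x (by simp [hx])) ?_
        intro hhead
        apply hiv
        cases w with
        | nil => simp at hhead
        | cons c w' =>
          simp only [List.head?_cons, Option.some_inj] at hhead
          subst h0 hhead
          exact ⟨[], w', rfl⟩
      simp only [Nval] at hval
      rw [hlen] at hval hbu hu0
      have h2 : 3 ^ (w.length + 1) = 3 * 3 ^ w.length := by ring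
      have hab : a = b := by
        rcases ha with h | h | h <;> rcases hb with h' | h' | h' <;>
          subst h <;> subst h' <;> first | rfl | omega
      subst hab
      have huw : Nval u = Nval w := by omega
      rw [ih w (fun x hx => hu x (by simp [hx])) (fun x hx => hv x (by simp [hx]))
        (fun h => hiu (h.trans (List.suffix_cons a u).isInfix))
        (fun h => hiv (h.trans (List.suffix_cons a w).isInfix)) hlen huw]

lemma close (i j : List ℕ) (hli : i.length = j.length)
    (hcap : ((Sw i '' Set.Icc 0 (9 / 2)) ∩ (Sw j '' Set.Icc 0 (9 / 2))).Nonempty) :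
    2 * Nval i ≤ 2 * Nval j + 3 ∧ 2 * Nval j ≤ 2 * Nval i + 3 := by
  obtain ⟨x, ⟨s, hs, hsx⟩, ⟨t, ht, htx⟩⟩ := hcap
  rw [Sw_eq] at hsx htx
  rw [← hli] at htx
  have h3 : (0:ℝ) < 3 ^ i.length := by positivity
  have key : s + 3 * (Nval i : ℝ) = t + 3 * Nval j := by
    have h := hsx.trans htx.symm
    field_simp at h
    linarith
  simp only [Set.mem_Icc] at hs ht
  constructor
  · have : (2 * Nval i : ℝ) ≤ 2 * Nval j + 3 := by linarith
    exact_mod_cast this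
  · have : (2 * Nval j : ℝ) ≤ 2 * Nval i + 3 := by linarith
    exact_mod_cast this

/-- For every `i ∈ T_n` there is at most one `j ∈ T_n`, `j ≠ i`, with
`I_i ∩ I_j ≠ ∅`, where `I_w = S_w([0, 9/2])`. -/
theorem stmt_5 (n : ℕ) (i : List ℕ) (hi : i ∈ Tset n)
    (j₁ j₂ : List ℕ) (hj₁ : j₁ ∈ Tset n) (hj₂ : j₂ ∈ Tset n)
    (hne₁ : j₁ ≠ i) (hne₂ : j₂ ≠ i)
    (hcap₁ : ((Sw i '' Set.Icc 0 (9 / 2)) ∩ (Sw j₁ '' Set.Icc 0 (9 / 2))).Nonempty)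
    (hcap₂ : ((Sw i '' Set.Icc 0 (9 / 2)) ∩ (Sw j₂ '' Set.Icc 0 (9 / 2))).Nonempty) :
    j₁ = j₂ := by
  obtain ⟨hleni, hAi, hIi⟩ := hi
  obtain ⟨hlen1, hA1, hI1⟩ := hj₁
  obtain ⟨hlen2, hA2, hI2⟩ := hj₂
  cases n with
  | zero =>
    exact absurd ((List.eq_nil_of_length_eq_zero hlen1).trans
      (List.eq_nil_of_length_eq_zero hleni).symm) hne₁
  | succ m =>
    have hne_i : i ≠ [] := by intro h; subst h; simp at hleni
    have hne_1 : j₁ ≠ [] := by intro h; subst h; simp at hlen1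
    have hne_2 : j₂ ≠ [] := by intro h; subst h; simp at hlen2
    have c1 := close i j₁ (by rw [hleni, hlen1]) hcap₁
    have c2 := close i j₂ (by rw [hleni, hlen2]) hcap₂
    have inj1 : Nval j₁ ≠ Nval i := fun h =>
      hne₁ (Nval_inj j₁ i hA1 hAi hI1 hIi (by rw [hleni, hlen1]) h)
    have inj2 : Nval j₂ ≠ Nval i := fun h =>
      hne₂ (Nval_inj j₂ i hA2 hAi hI2 hIi (by rw [hleni, hlen2]) h)
    have mi := Nval_mod i hAi hne_i
    have m1 := Nval_mod j₁ hA1 hne_1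
    have m2 := Nval_mod j₂ hA2 hne_2
    have heq : Nval j₁ = Nval j₂ := by omega
    exact Nval_inj j₁ j₂ hA1 hA2 hI1 hI2 (by rw [hlen1, hlen2]) heq
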